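/- arXiv:2505.21400 — 2 statements merged into one kernel-verified Lean document; each statement's English description precedes it below -/
import Mathlib

section
/- The total correlation of a random vector is bounded by the sum of single-coordinate mutual informations: KL(p_X || ∏_{i=1}^L p_{X^{(i)}}) ≤ ∑_{i=1}^L I(X^{(i)}; X^{(-i)}). -/
open scoped BigOperators
noncomputable section

variable {L : ℕ} {𝕏 : Type*} [Fintype 𝕏] [DecidableEq 𝕏]

/-- Marginal distribution of the i-th coordinate. -/
def margCoord (p : (Fin L → 𝕏) → ℝ) (i : Fin L) (a : 𝕏) : ℝ :=
  ∑ x : Fin L → 𝕏, if x i = a then p x else 0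

/-- Joint marginal distribution of all coordinates except `i`. -/
def margRest (p : (Fin L → 𝕏) → ℝ) (i : Fin L)
    (g : {j : Fin L // j ≠ i} → 𝕏) : ℝ :=
  ∑ x : Fin L → 𝕏, if (fun j : {j : Fin L // j ≠ i} => x j.1) = g then p x else 0

/-- Mutual information `I(X^{(i)}; X^{(-i)})`. -/
def miCoordRest (p : (Fin L → 𝕏) → ℝ) (i : Fin L) : ℝ :=
  ∑ x : Fin L → 𝕏,
    p x * Real.log (p x /
      (margCoord p i (x i) * margRest p i (fun j => x j.1)))

/-! With `p(xᵢ | x_{<i})` the conditional law of a coordinate given the earlier ones, the chain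
rule `log p(x) = ∑ᵢ log p(xᵢ | x_{<i})` turns `∑ᵢ I(X^{(i)}; X^{(-i)}) - KL(p ‖ ∏ᵢ p_{X^{(i)}})`
into `∑ᵢ (H(X^{(i)} | X^{(<i)}) - H(X^{(i)} | X^{(-i)}))`. Each summand is the divergence of `p`
from the law of `X` with coordinate `i` redrawn given `X^{(<i)}`, hence nonnegative by Gibbs'
inequality. -/

open Finset Real

section Marginal

variable {ι α : Type*} [Fintype ι] [DecidableEq ι] [Fintype α] [DecidableEq α]

def marginal (p : (ι → α) → ℝ) (S : Finset ι) (x : ι → α) : ℝ :=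
  ∑ y, if ∀ j ∈ S, y j = x j then p y else 0

-- `P(X^{(i)} = x_i | X^{(S)} = x_S)`, with junk value `0` when the conditioning event is null.
def condMarginal (p : (ι → α) → ℝ) (i : ι) (S : Finset ι) (x : ι → α) : ℝ :=
  marginal p (insert i S) x / marginal p S x

variable {p : (ι → α) → ℝ}

lemma marginal_nonneg (hp0 : ∀ x, 0 ≤ p x) (S : Finset ι) (x : ι → α) :
    0 ≤ marginal p S x :=
  sum_nonneg fun y _ => by split_ifs <;> simp [hp0]

lemma le_marginal (hp0 : ∀ x, 0 ≤ p x) (S : Finset ι) (x : ι → α) :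
    p x ≤ marginal p S x := by
  simpa [marginal] using single_le_sum (fun y _ => by split_ifs <;> simp [hp0])
    (mem_univ x) (f := fun y => if ∀ j ∈ S, y j = x j then p y else 0)

lemma marginal_empty (x : ι → α) : marginal p ∅ x = ∑ y, p y := by
  simp [marginal]

lemma marginal_univ (x : ι → α) : marginal p univ x = p x := by
  simp [marginal, ← funext_iff]

lemma marginal_update_of_notMem {S : Finset ι} {i : ι} (hi : i ∉ S) (x : ι → α) (a : α) :
    marginal p S (Function.update x i a) = marginal p S x := by
  unfold marginal
  refine sum_congr rfl fun y _ => if_congr ?_ rfl rfl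
  refine forall₂_congr fun j hj => ?_
  rw [Function.update_of_ne (ne_of_mem_of_not_mem hj hi)]

lemma sum_marginal_insert_update {S : Finset ι} {i : ι} (hi : i ∉ S) (x : ι → α) :
    ∑ a, marginal p (insert i S) (Function.update x i a) = marginal p S x := by
  unfold marginal
  rw [sum_comm]
  refine sum_congr rfl fun y _ => ?_
  have hcond : ∀ a, (∀ j ∈ insert i S, y j = Function.update x i a j) ↔
      (y i = a ∧ ∀ j ∈ S, y j = x j) := fun a => by
    rw [forall_mem_insert, Function.update_self]
    exact and_congr_right' <| forall₂_congr fun j hj => by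
      rw [Function.update_of_ne (ne_of_mem_of_not_mem hj hi)]
  simp_rw [hcond, ite_and, sum_ite_eq, mem_univ, if_true]

lemma sum_ite_agree_off_eq_sum_update (y : ι → α) (i : ι) (f : (ι → α) → ℝ) :
    ∑ x, (if ∀ j ∈ ({i}ᶜ : Finset ι), y j = x j then f x else 0) =
      ∑ a, f (Function.update y i a) := by
  rw [← sum_filter]
  have himage : ({x | ∀ j ∈ ({i}ᶜ : Finset ι), y j = x j} : Finset (ι → α)) =
      univ.image (Function.update y i) := by
    ext x
    simp [Function.update_eq_iff]
  rw [himage, sum_image fun a _ b _ h => Function.update_injective y i h]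

lemma sum_marginal_compl_mul (i : ι) (f : (ι → α) → ℝ) :
    ∑ x, marginal p {i}ᶜ x * f x = ∑ y, p y * ∑ a, f (Function.update y i a) := by
  simp_rw [marginal, sum_mul, ite_mul, zero_mul]
  rw [sum_comm]
  simp_rw [sum_ite_agree_off_eq_sum_update, mul_sum]

lemma sum_condMarginal_update_le_one {S : Finset ι} {i : ι} (hi : i ∉ S) (x : ι → α) :
    ∑ a, condMarginal p i S (Function.update x i a) ≤ 1 := by
  simp_rw [condMarginal, marginal_update_of_notMem hi, ← sum_div,
    sum_marginal_insert_update hi]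
  exact div_self_le_one _

lemma sum_marginal_compl_mul_condMarginal_le (hp0 : ∀ x, 0 ≤ p x) {S : Finset ι} {i : ι}
    (hi : i ∉ S) :
    ∑ x, marginal p {i}ᶜ x * condMarginal p i S x ≤ ∑ x, p x := by
  rw [sum_marginal_compl_mul]
  exact sum_le_sum fun y _ =>
    mul_le_of_le_one_right (hp0 y) (sum_condMarginal_update_le_one hi y)

end Marginal

lemma mul_log_div_le_sub {a b : ℝ} (ha : 0 ≤ a) (hb : 0 ≤ b) (hab : 0 < a → 0 < b) :
    a * log (b / a) ≤ b - a := by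
  rcases ha.eq_or_lt with rfl | ha
  · simpa using hb
  have hlog := log_le_sub_one_of_pos (div_pos (hab ha) ha)
  calc a * log (b / a) ≤ a * (b / a - 1) := mul_le_mul_of_nonneg_left hlog ha.le
    _ = b - a := by field_simp

lemma sum_mul_log_div_nonpos {β : Type*} [Fintype β] {p q : β → ℝ} (hp0 : ∀ x, 0 ≤ p x)
    (hq0 : ∀ x, 0 ≤ q x) (hpq : ∀ x, 0 < p x → 0 < q x) (hsum : ∑ x, q x ≤ ∑ x, p x) :
    ∑ x, p x * log (q x / p x) ≤ 0 :=
  calc ∑ x, p x * log (q x / p x) ≤ ∑ x, (q x - p x) :=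
        sum_le_sum fun x _ => mul_log_div_le_sub (hp0 x) (hq0 x) (hpq x)
    _ ≤ 0 := by rw [sum_sub_distrib]; linarith

section Coordinates

def prefixCoords (k : ℕ) : Finset (Fin L) := {j | (j : ℕ) < k}

lemma prefixCoords_zero : (prefixCoords 0 : Finset (Fin L)) = ∅ := by
  simp [prefixCoords]

lemma prefixCoords_self : (prefixCoords L : Finset (Fin L)) = univ := by
  simp [prefixCoords]

lemma notMem_prefixCoords (i : Fin L) : i ∉ prefixCoords i := by
  simp [prefixCoords]

lemma insert_prefixCoords (i : Fin L) :
    insert i (prefixCoords i) = prefixCoords (i + 1) := by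
  ext j
  simp [prefixCoords, le_iff_eq_or_lt, Fin.val_inj]

lemma sum_log_condMarginal_prefix {p : (Fin L → 𝕏) → ℝ} (hp0 : ∀ x, 0 ≤ p x)
    (hp1 : ∑ x, p x = 1) {x : Fin L → 𝕏} (hx : 0 < p x) :
    ∑ i : Fin L, log (condMarginal p i (prefixCoords i) x) = log (p x) := by
  have hpos : ∀ S, marginal p S x ≠ 0 := fun S => (hx.trans_le (le_marginal hp0 S x)).ne'
  simp_rw [condMarginal, log_div (hpos _) (hpos _), insert_prefixCoords]
  rw [Fin.sum_univ_eq_sum_range (fun k => log (marginal p (prefixCoords (k + 1)) x) -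
      log (marginal p (prefixCoords k) x)),
    sum_range_sub (fun k => log (marginal p (prefixCoords k) x)), prefixCoords_self,
    prefixCoords_zero, marginal_univ, marginal_empty, hp1, log_one, sub_zero]

variable (p : (Fin L → 𝕏) → ℝ)

lemma margCoord_eq_marginal (i : Fin L) (x : Fin L → 𝕏) :
    margCoord p i (x i) = marginal p {i} x := by
  simp [margCoord, marginal]

lemma margRest_eq_marginal (i : Fin L) (x : Fin L → 𝕏) :
    margRest p i (fun j => x j.1) = marginal p {i}ᶜ x := by
  simp [margRest, marginal, funext_iff]

-- The law of `X` with its `i`-th coordinate redrawn from its conditional law given `X^{(<i)}`.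
def resampled (i : Fin L) (x : Fin L → 𝕏) : ℝ :=
  marginal p {i}ᶜ x * condMarginal p i (prefixCoords i) x

variable {p}

lemma sum_mul_log_resampled_div_nonpos (hp0 : ∀ x, 0 ≤ p x) (i : Fin L) :
    ∑ x, p x * log (resampled p i x / p x) ≤ 0 := by
  refine sum_mul_log_div_nonpos hp0 (fun x => ?_) (fun x hx => ?_)
    (sum_marginal_compl_mul_condMarginal_le hp0 (notMem_prefixCoords i))
  · exact mul_nonneg (marginal_nonneg hp0 _ x)
      (div_nonneg (marginal_nonneg hp0 _ x) (marginal_nonneg hp0 _ x))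
  · have hm : ∀ S, 0 < marginal p S x := fun S => hx.trans_le (le_marginal hp0 S x)
    exact mul_pos (hm _) (div_pos (hm _) (hm _))

lemma log_div_prod_margCoord_eq (hp0 : ∀ x, 0 ≤ p x) (hp1 : ∑ x, p x = 1)
    {x : Fin L → 𝕏} (hx : 0 < p x) :
    log (p x / ∏ i, margCoord p i (x i)) =
      ∑ i, (log (p x / (margCoord p i (x i) * margRest p i (fun j => x j.1))) +
        log (resampled p i x / p x)) := by
  have hm : ∀ S, 0 < marginal p S x := fun S => hx.trans_le (le_marginal hp0 S x)
  have hc : ∀ i : Fin L, 0 < condMarginal p i (prefixCoords i) x :=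
    fun i => div_pos (hm _) (hm _)
  have hterm : ∀ i : Fin L,
      log (p x / (marginal p {i} x * marginal p {i}ᶜ x)) + log (resampled p i x / p x) =
        log (condMarginal p i (prefixCoords i) x) - log (marginal p {i} x) := fun i => by
    rw [resampled, log_div hx.ne' (mul_pos (hm _) (hm _)).ne', log_mul (hm _).ne' (hm _).ne',
      log_div (mul_pos (hm _) (hc i)).ne' hx.ne', log_mul (hm _).ne' (hc i).ne']
    ring
  simp_rw [margCoord_eq_marginal, margRest_eq_marginal, hterm, sum_sub_distrib,
    sum_log_condMarginal_prefix hp0 hp1 hx]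
  rw [log_div hx.ne' (prod_pos fun i _ => hm _).ne', log_prod fun i _ => (hm _).ne']

end Coordinates

/-- Total correlation is bounded by the sum of single-coordinate mutual
informations: `KL(p_X ‖ ∏ᵢ p_{X^{(i)}}) ≤ ∑ᵢ I(X^{(i)}; X^{(-i)})`. -/
theorem total_correlation_le_sum_mi
    (p : (Fin L → 𝕏) → ℝ) (hp0 : ∀ x, 0 ≤ p x) (hp1 : ∑ x, p x = 1) :
    (∑ x : Fin L → 𝕏, p x * Real.log (p x / ∏ i : Fin L, margCoord p i (x i)))
      ≤ ∑ i : Fin L, miCoordRest p i := by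
  calc (∑ x : Fin L → 𝕏, p x * Real.log (p x / ∏ i : Fin L, margCoord p i (x i)))
      = ∑ x, ∑ i, (p x * log (p x / (margCoord p i (x i) * margRest p i (fun j => x j.1))) +
          p x * log (resampled p i x / p x)) := sum_congr rfl fun x _ => by
        rcases (hp0 x).eq_or_lt with hx | hx
        · simp [← hx]
        · simp_rw [log_div_prod_margCoord_eq hp0 hp1 hx, mul_sum, mul_add]
    _ = ∑ i, miCoordRest p i + ∑ i, ∑ x, p x * log (resampled p i x / p x) := by
        simp_rw [sum_add_distrib, miCoordRest]
        congr 1 <;> exact sum_comm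
    _ ≤ ∑ i, miCoordRest p i :=
        add_le_of_nonpos_right (sum_nonpos fun i _ => sum_mul_log_resampled_div_nonpos hp0 i)
end
end

section
/- Two-batch decomposition of KL against a product distribution: let X be a random vector on a finite alphabet, W ⊆ [L], and let D = D₋ ∪ D₊ be a partition of a set D disjoint from W. Writing W' := W ∪ D₋, the following identity holds: E_{X∘W}[KL(p(X∘D | X∘W) || p^⊗(X∘D | X∘W))] = E_{X∘W}[KL(p(X∘D₋ | X∘W) || p^⊗(X∘D₋ | X∘W))] + E_{X∘W'}[KL(p(X∘D₊ | X∘W') || p^⊗(X∘D₊ | X∘W'))] + ∑_{i∈D₊} I(X^{(i)}; X∘D₋ | X∘W). -/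
open scoped BigOperators
noncomputable section

variable {L : ℕ} {𝕏 : Type*} [Fintype 𝕏] [DecidableEq 𝕏]

/-- Marginal distribution of `p` on the coordinates indexed by `S`. -/
def margF (p : (Fin L → 𝕏) → ℝ) (S : Finset (Fin L)) (f : S → 𝕏) : ℝ :=
  ∑ x : Fin L → 𝕏, if (fun j : S => x j.1) = f then p x else 0

/-- Conditional mutual information `I(X^{(i)} ; X ∘ D | X ∘ W)`. -/
def condMI (p : (Fin L → 𝕏) → ℝ) (i : Fin L) (D W : Finset (Fin L)) : ℝ :=
  ∑ x : Fin L → 𝕏,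
    p x * Real.log
      ((margF p (insert i (W ∪ D)) (fun j => x j.1) * margF p W (fun j => x j.1)) /
        (margF p (insert i W) (fun j => x j.1) * margF p (W ∪ D) (fun j => x j.1)))

/-- Expected KL divergence (over `X ∘ W`) between the conditional law of `X ∘ D`
given `X ∘ W` and the product of its conditional one-dimensional marginals. -/
def eklProd (p : (Fin L → 𝕏) → ℝ) (W D : Finset (Fin L)) : ℝ :=
  ∑ x : Fin L → 𝕏,
    p x * Real.log
      ((margF p (W ∪ D) (fun j => x j.1) / margF p W (fun j => x j.1)) /
        (∏ i ∈ D, (margF p (insert i W) (fun j => x j.1) / margF p W (fun j => x j.1))))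

/-!
All four quantities are expectations `∑ x, p x * log (…)` of log-ratios of marginals evaluated
at `x`. Where `p x > 0` every marginal at `x` is positive, so each logarithm splits into a sum of
log-marginals and the identity reduces to a cancellation among them; where `p x = 0` the
summands vanish.
-/

lemma margF_restrict_pos {p : (Fin L → 𝕏) → ℝ} (hp0 : ∀ x, 0 ≤ p x) {x : Fin L → 𝕏}
    (hx : 0 < p x) (S : Finset (Fin L)) : 0 < margF p S (fun j => x j.1) :=
  hx.trans_le <| by
    simpa [margF] using Finset.single_le_sum (s := Finset.univ)
      (f := fun y : Fin L → 𝕏 => if (fun j : S => y j.1) = (fun j : S => x j.1) then p y else 0)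
      (fun y _ => by split_ifs <;> simp [hp0 y]) (Finset.mem_univ x)

section LogRatio

open Real Finset

variable {ι : Type*}

lemma log_div_div_prod_div {u v : ℝ} (hu : 0 < u) (hv : 0 < v) {s : Finset ι} {h : ι → ℝ}
    (hh : ∀ i ∈ s, 0 < h i) :
    log ((u / v) / ∏ i ∈ s, h i / v) = log u - log v - ∑ i ∈ s, (log (h i) - log v) := by
  have hprod : 0 < ∏ i ∈ s, h i / v := prod_pos fun i hi => div_pos (hh i hi) hv
  rw [log_div (div_pos hu hv).ne' hprod.ne', log_div hu.ne' hv.ne',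
    log_prod fun i hi => (div_pos (hh i hi) hv).ne']
  exact congrArg _ (sum_congr rfl fun i hi => log_div (hh i hi).ne' hv.ne')

/-- At a point `x`, `a, b, c` are the marginals on `W`, `W ∪ D₋`, `W ∪ D₋ ∪ D₊` and `f i`, `g i`
those on `insert i W`, `insert i (W ∪ D₋)`. -/
lemma log_div_div_prod_div_union [DecidableEq ι] {s t : Finset ι} (hst : Disjoint s t)
    {a b c : ℝ} (ha : 0 < a) (hb : 0 < b) (hc : 0 < c) {f g : ι → ℝ}
    (hf : ∀ i ∈ s ∪ t, 0 < f i) (hg : ∀ i ∈ t, 0 < g i) :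
    log ((c / a) / ∏ i ∈ s ∪ t, f i / a) =
      log ((b / a) / ∏ i ∈ s, f i / a) + log ((c / b) / ∏ i ∈ t, g i / b) +
        ∑ i ∈ t, log (g i * a / (f i * b)) := by
  have hfs : ∀ i ∈ s, 0 < f i := fun i hi => hf i (mem_union_left t hi)
  have hft : ∀ i ∈ t, 0 < f i := fun i hi => hf i (mem_union_right s hi)
  have hmi : ∀ i ∈ t, log (g i * a / (f i * b)) = log (g i) + log a - (log (f i) + log b) :=
    fun i hi => by
      rw [log_div (mul_pos (hg i hi) ha).ne' (mul_pos (hft i hi) hb).ne',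
        log_mul (hg i hi).ne' ha.ne', log_mul (hft i hi).ne' hb.ne']
  rw [log_div_div_prod_div hc ha hf, log_div_div_prod_div hb ha hfs,
    log_div_div_prod_div hc hb hg, sum_union hst, sum_congr rfl hmi]
  simp only [sum_sub_distrib, sum_add_distrib, sum_const, nsmul_eq_mul]
  ring

end LogRatio

theorem ekl_two_batch_decomposition_general
    (p : (Fin L → 𝕏) → ℝ) (hp0 : ∀ x, 0 ≤ p x)
    (W Dm Dp : Finset (Fin L))
    (hDmDp : Disjoint Dm Dp) :
    eklProd p W (Dm ∪ Dp) =
      eklProd p W Dm + eklProd p (W ∪ Dm) Dp +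
        ∑ i ∈ Dp, condMI p i Dm W := by
  simp only [eklProd, condMI]
  rw [Finset.sum_comm (s := Dp), ← Finset.sum_add_distrib, ← Finset.sum_add_distrib]
  refine Finset.sum_congr rfl fun x _ => ?_
  rcases (hp0 x).eq_or_lt with hx | hx
  · simp [← hx]
  rw [← Finset.mul_sum, ← mul_add, ← mul_add, ← Finset.union_assoc]
  have hpos := margF_restrict_pos hp0 hx
  exact congrArg _ (log_div_div_prod_div_union hDmDp (hpos _) (hpos _) (hpos _)
    (fun i _ => hpos _) (fun i _ => hpos _))

/-- Two-batch decomposition of the expected conditional KL against the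
product distribution. -/
theorem ekl_two_batch_decomposition
    (p : (Fin L → 𝕏) → ℝ) (hp0 : ∀ x, 0 ≤ p x) (hp1 : ∑ x, p x = 1)
    (W Dm Dp : Finset (Fin L))
    (hWDm : Disjoint W Dm) (hWDp : Disjoint W Dp) (hDmDp : Disjoint Dm Dp) :
    eklProd p W (Dm ∪ Dp) =
      eklProd p W Dm + eklProd p (W ∪ Dm) Dp +
        ∑ i ∈ Dp, condMI p i Dm W :=
  ekl_two_batch_decomposition_general p hp0 W Dm Dp hDmDp
end
end
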